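/- arXiv:2201.02390 — 2 statements merged into one kernel-verified Lean document; each statement's English description precedes it below -/
import Mathlib

section
/- Let F : ℝ^{N-1} → ℝ be κ-Lipschitz, β > 0, a > √(1+κ²), and let Σ_β = {(β+F(x'), x') : |x'| < r} be the shifted graph surface (r large relative to aβ). If y lies between the graph of F and Σ_β (i.e. F(y') < y₁ < β + F(y')) with |y'| < r/2, then there exist constants c₁, c₂ > 0 depending only on κ, a, N (not on β, y, F) such that c₁ β ≤ ∫_{Σ_β ∩ B(y, aβ)} |x−y|^{2−N} dH^{N−1}(x) ≤ c₂ β. -/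
/-!
The surface `Σ_β` is the image of the ball `{‖u‖ < r}` under the graph map `G u = (β + F u, u)`,
which is `(κ + 1)`-Lipschitz and does not decrease distances. On `ℝⁿ` the measure `μH[n]` is an
additive Haar measure, so a ball of radius `ρ` has measure `ρⁿ μH[n](B₁)`.

Upper bound: the part of `Σ_β` in `B(y, aβ)` lies over `B(y', aβ)`, and at `G u` the kernel is at
most `‖u - y'‖^{1-n}`. The Lipschitz image estimate for `μH[n]` therefore bounds the integral by
`(κ + 1)ⁿ` times the Riesz potential `∫_{B(y', R)} ‖u - y'‖^{1-n} = n μH[n](B₁) R`, computed in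
polar coordinates.

Lower bound: `y` lies within vertical distance `β` of `Σ_β` and `a > 1`, so for small `δ` the
graph over `B(y', δβ)` stays inside `B(y, aβ)`. There the kernel is at least `(aβ)^{1-n}`, and the
`μH[n]`-measure of that piece is at least that of `B(y', δβ)`, which is `(δβ)ⁿ μH[n](B₁)`.
-/

open MeasureTheory Metric

/-- The point `(t, x) ∈ ℝ^{n+1}`. -/
noncomputable def pt {n : ℕ} (t : ℝ) (x : EuclideanSpace ℝ (Fin n)) :
    EuclideanSpace ℝ (Fin (n + 1)) :=
  (EuclideanSpace.equiv (Fin (n + 1)) ℝ).symm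
    (Fin.cons t ((EuclideanSpace.equiv (Fin n) ℝ) x))

open Set Filter Topology Module
open scoped NNReal ENNReal

section RieszPotential

variable {E : Type*} [NormedAddCommGroup E] [NormedSpace ℝ E] [FiniteDimensional ℝ E]
  [MeasurableSpace E] [BorelSpace E] [Nontrivial E] (μ : Measure E) [μ.IsAddHaarMeasure]

theorem lintegral_ball_norm_sub_rpow_one_sub_finrank (y : E) {R : ℝ} (hR : 0 ≤ R) :
    ∫⁻ x in ball y R, ENNReal.ofReal (‖x - y‖ ^ (1 - (finrank ℝ E : ℝ))) ∂μ
      = ENNReal.ofReal (finrank ℝ E * μ.real (ball 0 1) * R) := by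
  set d := finrank ℝ E
  set g : ℝ → ℝ := (Iio R).indicator (· ^ (1 - (d : ℝ)))
  have hg : (ball (0 : E) R).indicator (fun x ↦ ‖x‖ ^ (1 - (d : ℝ))) = fun x ↦ g ‖x‖ := by
    ext x; by_cases hx : ‖x‖ < R <;> simp [g, indicator, hx]
  -- in polar coordinates the kernel cancels the Jacobian `y ^ (d - 1)`
  have hradial : EqOn (fun y ↦ y ^ (d - 1) • g y) ((Iio R).indicator 1) (Ioi 0) := by
    intro y (hy : 0 < y)
    have : y ^ (d - 1) * y ^ (1 - (d : ℝ)) = 1 := by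
      rw [← Real.rpow_natCast, ← Real.rpow_add hy, Nat.cast_sub finrank_pos, Nat.cast_one,
        show (d : ℝ) - 1 + (1 - d) = 0 by ring, Real.rpow_zero]
    by_cases hyR : y < R <;> simp [g, hyR, this]
  have hIoo : Iio R ∩ Ioi 0 = Ioo 0 R := by ext; simp [and_comm]
  have hint : IntegrableOn (fun x : E ↦ ‖x‖ ^ (1 - (d : ℝ))) (ball 0 R) μ := by
    rw [← integrable_indicator_iff measurableSet_ball, hg, integrable_fun_norm_addHaar,
      integrableOn_congr_fun hradial measurableSet_Ioi,
      integrableOn_indicator_iff measurableSet_Iio, hIoo]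
    exact integrableOn_const (by simp)
  have hval : ∫ x in ball (0 : E) R, ‖x‖ ^ (1 - (d : ℝ)) ∂μ = d * μ.real (ball 0 1) * R := by
    rw [← integral_indicator measurableSet_ball, hg, integral_fun_norm_addHaar,
      setIntegral_congr_fun measurableSet_Ioi hradial, setIntegral_indicator measurableSet_Iio,
      inter_comm, hIoo]
    simp [d, Real.volume_real_Ioo_of_le hR, mul_assoc]
  rw [← hval, ofReal_integral_eq_lintegral_ofReal hint
    (.of_forall fun x ↦ Real.rpow_nonneg (norm_nonneg x) _),
    ← lintegral_indicator measurableSet_ball, ← lintegral_indicator measurableSet_ball]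
  conv_rhs => rw [← lintegral_sub_right_eq_self _ y]
  congr 1
  ext x
  simp [indicator, dist_eq_norm]

end RieszPotential

theorem LipschitzWith.setLIntegral_image_hausdorffMeasure_le {X Y : Type*}
    [EMetricSpace X] [MeasurableSpace X] [BorelSpace X]
    [EMetricSpace Y] [MeasurableSpace Y] [BorelSpace Y]
    {K : ℝ≥0} {f : X → Y} (hf : LipschitzWith K f) {d : ℝ} (hd : 0 ≤ d)
    {g : Y → ℝ≥0∞} (hg : Measurable g) (s : Set X) :
    ∫⁻ y in f '' s, g y ∂μH[d] ≤ (K : ℝ≥0∞) ^ d * ∫⁻ x in s, g (f x) ∂μH[d] := by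
  have hfm : Measurable f := hf.continuous.measurable
  have hle : (μH[d] : Measure Y).restrict (f '' s) ≤ ((K : ℝ≥0∞) ^ d) •
      Measure.map f ((μH[d] : Measure X).restrict s) := by
    refine Measure.le_iff.2 fun t ht ↦ ?_
    rw [Measure.restrict_apply ht, Measure.smul_apply, Measure.map_apply hfm ht,
      Measure.restrict_apply (hfm ht), smul_eq_mul]
    calc μH[d] (t ∩ f '' s) ≤ μH[d] (f '' (f ⁻¹' t ∩ s)) :=
          measure_mono fun _ ⟨hxt, x, hx, hfx⟩ ↦ ⟨x, ⟨show f x ∈ t from hfx ▸ hxt, hx⟩, hfx⟩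
      _ ≤ _ := hf.hausdorffMeasure_image_le hd _
  calc ∫⁻ y in f '' s, g y ∂μH[d]
      ≤ ∫⁻ y, g y ∂(((K : ℝ≥0∞) ^ d) • Measure.map f ((μH[d] : Measure X).restrict s)) :=
        lintegral_mono' hle le_rfl
    _ = _ := by rw [lintegral_smul_measure, lintegral_map hg hfm, smul_eq_mul]

section Graph

variable {n : ℕ}

theorem pt_sub (t s : ℝ) (x y : EuclideanSpace ℝ (Fin n)) :
    pt t x - pt s y = pt (t - s) (x - y) := by
  ext i
  induction i using Fin.cases <;> rfl

theorem norm_pt_sq (t : ℝ) (x : EuclideanSpace ℝ (Fin n)) :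
    ‖pt t x‖ ^ 2 = t ^ 2 + ‖x‖ ^ 2 := by
  rw [EuclideanSpace.norm_sq_eq, EuclideanSpace.norm_sq_eq, Fin.sum_univ_succ]
  simp [pt]

noncomputable def graphMap (f : EuclideanSpace ℝ (Fin n) → ℝ) (u : EuclideanSpace ℝ (Fin n)) :
    EuclideanSpace ℝ (Fin (n + 1)) :=
  pt (f u) u

variable (f : EuclideanSpace ℝ (Fin n) → ℝ)

theorem norm_graphMap_sub_pt_sq (u v : EuclideanSpace ℝ (Fin n)) (t : ℝ) :
    ‖graphMap f u - pt t v‖ ^ 2 = (f u - t) ^ 2 + ‖u - v‖ ^ 2 := by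
  rw [graphMap, pt_sub, norm_pt_sq]

theorem norm_sub_le_norm_graphMap_sub_pt (u v : EuclideanSpace ℝ (Fin n)) (t : ℝ) :
    ‖u - v‖ ≤ ‖graphMap f u - pt t v‖ := by
  rw [← sq_le_sq₀ (norm_nonneg _) (norm_nonneg _), norm_graphMap_sub_pt_sq]
  exact le_add_of_nonneg_left (sq_nonneg _)

theorem graphMap_ne_pt {v : EuclideanSpace ℝ (Fin n)} {t : ℝ} (h : f v ≠ t)
    (u : EuclideanSpace ℝ (Fin n)) : graphMap f u ≠ pt t v := by
  intro heq
  have huv : u = v := by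
    simpa [heq, sub_eq_zero] using norm_sub_le_norm_graphMap_sub_pt f u v t
  subst huv
  exact h (congrArg (· 0) heq)

theorem antilipschitzWith_graphMap : AntilipschitzWith 1 (graphMap f) :=
  .of_le_mul_dist fun u v ↦ by
    simpa [dist_eq_norm, graphMap] using norm_sub_le_norm_graphMap_sub_pt f u v (f v)

variable {f} {K : ℝ≥0}

theorem lipschitzWith_graphMap (hf : LipschitzWith K f) : LipschitzWith (K + 1) (graphMap f) :=
  .of_dist_le_mul fun u v ↦ by
    have hfuv : |f u - f v| ≤ K * ‖u - v‖ := by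
      simpa [Real.dist_eq, dist_eq_norm] using hf.dist_le_mul u v
    rw [dist_eq_norm, dist_eq_norm, ← sq_le_sq₀ (norm_nonneg _) (by positivity),
      show graphMap f v = pt (f v) v from rfl, norm_graphMap_sub_pt_sq, NNReal.coe_add,
      NNReal.coe_one]
    nlinarith [sq_abs (f u - f v), abs_nonneg (f u - f v), norm_nonneg (u - v), K.2]

theorem image_graphMap_inter_ball_subset (s : Set (EuclideanSpace ℝ (Fin n)))
    (t : ℝ) (v : EuclideanSpace ℝ (Fin n)) (R : ℝ) :
    graphMap f '' s ∩ ball (pt t v) R ⊆ graphMap f '' ball v R := by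
  rintro _ ⟨⟨u, -, rfl⟩, hu⟩
  refine ⟨u, ?_, rfl⟩
  rw [mem_ball, dist_eq_norm] at hu ⊢
  exact (norm_sub_le_norm_graphMap_sub_pt f u v t).trans_lt hu

theorem graphMap_mem_ball_of_lipschitzWith (hf : LipschitzWith K f)
    {u v : EuclideanSpace ℝ (Fin n)} {t β ρ R : ℝ} (ht : |f v - t| ≤ β) (hu : ‖u - v‖ < ρ)
    (hR₀ : 0 ≤ R) (hR : (β + K * ρ) ^ 2 + ρ ^ 2 ≤ R ^ 2) :
    graphMap f u ∈ ball (pt t v) R := by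
  have hfu : |f u - t| ≤ β + K * ρ :=
    calc |f u - t| ≤ |f u - f v| + |f v - t| := abs_sub_le _ _ _
      _ ≤ K * ‖u - v‖ + β := by
          gcongr
          simpa [Real.dist_eq, dist_eq_norm] using hf.dist_le_mul u v
      _ ≤ β + K * ρ := by nlinarith [K.2]
  have hfu_sq : (f u - t) ^ 2 ≤ (β + K * ρ) ^ 2 := sq_le_sq' (abs_le.1 hfu).1 (abs_le.1 hfu).2
  have hu_sq : ‖u - v‖ ^ 2 < ρ ^ 2 := by gcongr
  rw [mem_ball, dist_eq_norm, ← sq_lt_sq₀ (norm_nonneg _) hR₀, norm_graphMap_sub_pt_sq]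
  linarith

end Graph

section RieszIntegralOverGraph

variable {n : ℕ} [NeZero n] {f : EuclideanSpace ℝ (Fin n) → ℝ} {K : ℝ≥0}

theorem lintegral_graphMap_inter_ball_le (hf : LipschitzWith K f)
    (s : Set (EuclideanSpace ℝ (Fin n))) (t : ℝ) (v : EuclideanSpace ℝ (Fin n)) {R : ℝ}
    (hR : 0 ≤ R) :
    ∫⁻ x in graphMap f '' s ∩ ball (pt t v) R, ENNReal.ofReal (‖x - pt t v‖ ^ (1 - (n : ℝ)))
        ∂μH[n]
      ≤ ENNReal.ofReal ((K + 1) ^ n * n *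
          (μH[n] : Measure (EuclideanSpace ℝ (Fin n))).real (ball 0 1) * R) := by
  have hkernel : ∀ᵐ u ∂(μH[n] : Measure (EuclideanSpace ℝ (Fin n))),
      ENNReal.ofReal (‖graphMap f u - pt t v‖ ^ (1 - (n : ℝ)))
        ≤ ENNReal.ofReal (‖u - v‖ ^ (1 - (n : ℝ))) := by
    filter_upwards [Measure.ae_ne _ v] with u hu
    exact ENNReal.ofReal_le_ofReal <| Real.rpow_le_rpow_of_nonpos
      (norm_pos_iff.2 (sub_ne_zero.2 hu)) (norm_sub_le_norm_graphMap_sub_pt f u v t)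
      (by simp [NeZero.one_le])
  have hK : ((K + 1 : ℝ≥0) : ℝ≥0∞) ^ (n : ℝ) = ENNReal.ofReal (((K : ℝ) + 1) ^ n) := by
    rw [ENNReal.rpow_natCast, ← ENNReal.ofReal_coe_nnreal, ← ENNReal.ofReal_pow (by positivity),
      NNReal.coe_add, NNReal.coe_one]
  have hpotential := lintegral_ball_norm_sub_rpow_one_sub_finrank
    (μH[n] : Measure (EuclideanSpace ℝ (Fin n))) v hR
  rw [finrank_euclideanSpace_fin] at hpotential
  calc _ ≤ ∫⁻ x in graphMap f '' ball v R, ENNReal.ofReal (‖x - pt t v‖ ^ (1 - (n : ℝ)))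
          ∂μH[n] := lintegral_mono_set (image_graphMap_inter_ball_subset s t v R)
    _ ≤ ((K + 1 : ℝ≥0) : ℝ≥0∞) ^ (n : ℝ) * ∫⁻ u in ball v R,
          ENNReal.ofReal (‖graphMap f u - pt t v‖ ^ (1 - (n : ℝ))) ∂μH[n] :=
        (lipschitzWith_graphMap hf).setLIntegral_image_hausdorffMeasure_le (Nat.cast_nonneg n)
          (by fun_prop) _
    _ ≤ ((K + 1 : ℝ≥0) : ℝ≥0∞) ^ (n : ℝ) * ∫⁻ u in ball v R,
          ENNReal.ofReal (‖u - v‖ ^ (1 - (n : ℝ))) ∂μH[n] := by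
        gcongr 1
        exact lintegral_mono_ae (ae_restrict_of_ae hkernel)
    _ = _ := by
        rw [hpotential, hK, ← ENNReal.ofReal_mul (by positivity)]
        ring_nf

theorem le_lintegral_graphMap_inter_ball (hf : LipschitzWith K f)
    {s : Set (EuclideanSpace ℝ (Fin n))} {t β δ a : ℝ} {v : EuclideanSpace ℝ (Fin n)}
    (hs : ball v (δ * β) ⊆ s) (hv : f v ≠ t) (ht : |f v - t| ≤ β) (hβ : 0 < β) (hδ : 0 ≤ δ)
    (ha : 0 ≤ a) (hδa : (1 + K * δ) ^ 2 + δ ^ 2 ≤ a ^ 2) :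
    ENNReal.ofReal (a ^ (1 - (n : ℝ)) * δ ^ n *
        (μH[n] : Measure (EuclideanSpace ℝ (Fin n))).real (ball 0 1) * β)
      ≤ ∫⁻ x in graphMap f '' s ∩ ball (pt t v) (a * β),
          ENNReal.ofReal (‖x - pt t v‖ ^ (1 - (n : ℝ))) ∂μH[n] := by
  set R := a * β
  have hR : (β + K * (δ * β)) ^ 2 + (δ * β) ^ 2 ≤ R ^ 2 :=
    calc (β + K * (δ * β)) ^ 2 + (δ * β) ^ 2 = β ^ 2 * ((1 + K * δ) ^ 2 + δ ^ 2) := by ring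
      _ ≤ β ^ 2 * a ^ 2 := by gcongr
      _ = R ^ 2 := by ring
  have hsub : graphMap f '' ball v (δ * β) ⊆ graphMap f '' s ∩ ball (pt t v) R := by
    rintro _ ⟨u, hu, rfl⟩
    rw [mem_ball, dist_eq_norm] at hu
    exact ⟨mem_image_of_mem _ (hs (by rwa [mem_ball, dist_eq_norm])),
      graphMap_mem_ball_of_lipschitzWith hf ht hu (by positivity) hR⟩
  have hkernel : ∀ x ∈ graphMap f '' ball v (δ * β),
      ENNReal.ofReal (R ^ (1 - (n : ℝ))) ≤ ENNReal.ofReal (‖x - pt t v‖ ^ (1 - (n : ℝ))) := by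
    rintro _ ⟨u, hu, rfl⟩
    have hxR := (hsub (mem_image_of_mem _ hu)).2
    rw [mem_ball, dist_eq_norm] at hxR
    exact ENNReal.ofReal_le_ofReal <| Real.rpow_le_rpow_of_nonpos
      (norm_pos_iff.2 (sub_ne_zero.2 (graphMap_ne_pt f hv u))) hxR.le (by simp [NeZero.one_le])
  have hscale : a ^ (1 - (n : ℝ)) * δ ^ n * β = R ^ (1 - (n : ℝ)) * (δ * β) ^ n := by
    have hβn : β ^ (1 - (n : ℝ)) * β ^ n = β := by
      rw [← Real.rpow_natCast, ← Real.rpow_add hβ, sub_add_cancel, Real.rpow_one]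
    rw [Real.mul_rpow ha hβ.le, mul_pow]
    linear_combination (a ^ (1 - (n : ℝ)) * δ ^ n) * hβn.symm
  calc _ = ENNReal.ofReal (R ^ (1 - (n : ℝ))) * μH[n] (ball v (δ * β)) := by
        rw [Measure.addHaar_ball _ _ (by positivity), finrank_euclideanSpace_fin,
          ← ENNReal.ofReal_toReal (measure_ball_lt_top (μ := μH[n]) (x := 0) (r := 1)).ne,
          ← measureReal_def, ← mul_assoc, ← ENNReal.ofReal_mul (by positivity),
          ← ENNReal.ofReal_mul (by positivity)]
        congr 1
        linear_combination (μH[n] : Measure (EuclideanSpace ℝ (Fin n))).real (ball 0 1) * hscale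
    _ ≤ ENNReal.ofReal (R ^ (1 - (n : ℝ))) * μH[n] (graphMap f '' ball v (δ * β)) := by
        gcongr
        simpa using (antilipschitzWith_graphMap f).le_hausdorffMeasure_image (Nat.cast_nonneg n)
          (ball v (δ * β))
    _ = ∫⁻ _ in graphMap f '' ball v (δ * β), ENNReal.ofReal (R ^ (1 - (n : ℝ))) ∂μH[n] :=
        (setLIntegral_const _ _).symm
    _ ≤ ∫⁻ x in graphMap f '' ball v (δ * β),
          ENNReal.ofReal (‖x - pt t v‖ ^ (1 - (n : ℝ))) ∂μH[n] :=
        setLIntegral_mono (by fun_prop) hkernel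
    _ ≤ _ := lintegral_mono_set hsub

end RieszIntegralOverGraph

theorem exists_pos_le_one_sq_add_sq_le {a : ℝ} (ha : 1 < a) (κ : ℝ) :
    ∃ δ : ℝ, 0 < δ ∧ δ ≤ 1 ∧ (1 + κ * δ) ^ 2 + δ ^ 2 ≤ a ^ 2 := by
  have hlim : Tendsto (fun δ : ℝ ↦ (1 + κ * δ) ^ 2 + δ ^ 2) (𝓝[>] 0) (𝓝 1) := by
    have : Continuous fun δ : ℝ ↦ (1 + κ * δ) ^ 2 + δ ^ 2 := by fun_prop
    simpa using (this.tendsto 0).mono_left nhdsWithin_le_nhds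
  have hsmall : ∀ᶠ δ in 𝓝[>] (0 : ℝ), (1 + κ * δ) ^ 2 + δ ^ 2 < a ^ 2 :=
    hlim.eventually (gt_mem_nhds (by nlinarith))
  have hle_one : ∀ᶠ δ in 𝓝[>] (0 : ℝ), δ ≤ 1 :=
    Filter.mem_of_superset (Ioo_mem_nhdsGT one_pos) fun _ h ↦ h.2.le
  obtain ⟨δ, ⟨hδ₁, hδa⟩, hδ₀⟩ := ((hle_one.and hsmall).and self_mem_nhdsWithin).exists
  exact ⟨δ, hδ₀, hδ₁, hδa.le⟩

/-- two-sided bound, linear in `β`, for the integral of the Riesz kernel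
`|x-y|^{2-N}` over the part of the shifted graph surface `Σ_β` inside the ball `B(y, aβ)`,
for `y` lying between the graph of `F` and `Σ_β`. The constants depend only on `κ, a, N`. -/
theorem stmt1 (n : ℕ) (hn : 3 ≤ n + 1) (κ a : ℝ) (hκ : 0 < κ)
    (ha : Real.sqrt (1 + κ ^ 2) < a) :
    ∃ c₁ c₂ : ℝ, 0 < c₁ ∧ 0 < c₂ ∧
      ∀ (F : EuclideanSpace ℝ (Fin n) → ℝ), LipschitzWith κ.toNNReal F →
      ∀ (β r : ℝ), 0 < β → 4 * a * β ≤ r →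
      ∀ (y₁ : ℝ) (y' : EuclideanSpace ℝ (Fin n)),
        F y' < y₁ → y₁ < β + F y' → ‖y'‖ < r / 2 →
        c₁ * β ≤
          (∫ x in ({x | ∃ x' : EuclideanSpace ℝ (Fin n), ‖x'‖ < r ∧ x = pt (β + F x') x'} ∩
              ball (pt y₁ y') (a * β)),
            ‖x - pt y₁ y'‖ ^ (2 - ((n : ℝ) + 1)) ∂(Measure.hausdorffMeasure (n : ℝ))) ∧
        (∫ x in ({x | ∃ x' : EuclideanSpace ℝ (Fin n), ‖x'‖ < r ∧ x = pt (β + F x') x'} ∩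
              ball (pt y₁ y') (a * β)),
            ‖x - pt y₁ y'‖ ^ (2 - ((n : ℝ) + 1)) ∂(Measure.hausdorffMeasure (n : ℝ)))
          ≤ c₂ * β := by
  have hn₀ : 0 < n := by omega
  have : NeZero n := ⟨hn₀.ne'⟩
  have ha₁ : 1 < a := (Real.one_le_sqrt.2 (by nlinarith)).trans_lt ha
  obtain ⟨δ, hδ₀, hδ₁, hδ⟩ := exists_pos_le_one_sq_add_sq_le ha₁ κ
  set b := (μH[n] : Measure (EuclideanSpace ℝ (Fin n))).real (ball 0 1)
  have hb : 0 < b := ENNReal.toReal_pos (measure_ball_pos _ _ one_pos).ne' measure_ball_lt_top.ne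
  refine ⟨a ^ (1 - (n : ℝ)) * δ ^ n * b, (κ + 1) ^ n * n * b * a, by positivity,
    by positivity, ?_⟩
  intro F hF β r hβ hr y₁ y' hy₁ hy₂ hy'
  have hf : LipschitzWith κ.toNNReal (β + F ·) :=
    .of_dist_le_mul fun u v ↦ by rw [dist_add_left]; exact hF.dist_le_mul u v
  have hsurface : {x | ∃ x' : EuclideanSpace ℝ (Fin n), ‖x'‖ < r ∧ x = pt (β + F x') x'}
      = graphMap (β + F ·) '' ball 0 r := by
    ext; simp [graphMap, eq_comm]
  rw [hsurface, show 2 - ((n : ℝ) + 1) = 1 - n by ring, integral_eq_lintegral_of_nonneg_ae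
    (.of_forall fun _ ↦ Real.rpow_nonneg (norm_nonneg _) _)
    (Measurable.aestronglyMeasurable (by fun_prop))]
  have hup := lintegral_graphMap_inter_ball_le hf (ball 0 r) y₁ y' (by positivity : 0 ≤ a * β)
  have hlow := le_lintegral_graphMap_inter_ball hf (s := ball 0 r) (t := y₁) (v := y') (a := a)
    (ball_subset_ball' (by rw [dist_zero_right]; nlinarith)) (by linarith)
    (by rw [abs_le]; constructor <;> linarith) hβ hδ₀.le (by positivity)
    (by rwa [Real.coe_toNNReal _ hκ.le])
  rw [Real.coe_toNNReal _ hκ.le] at hup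
  exact ⟨(ENNReal.ofReal_le_iff_le_toReal (hup.trans_lt ENNReal.ofReal_lt_top).ne).1 hlow,
    ENNReal.toReal_le_of_le_ofReal (by positivity) (hup.trans_eq (congrArg _ (by ring)))⟩
end

section
/- Let F : ℝ^{N-1} → ℝ be κ-Lipschitz and let Σ = {(β+F(x'), x') : |x'| < r} with β > 0. Then for every y ∈ ℝ^N and a > 0, ∫_{Σ ∩ B(y, aβ)} |x−y|^{2−N} dH^{N−1}(x) ≤ C(κ, N) · a · β, i.e. the upper bound holds with constant linear in a. -/
/-!
Cut `ball y (a * β)` into the dyadic shells `ρ / 2 < dist x y ≤ ρ`, `ρ = a * β / 2 ^ k`. On such a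
shell the kernel is at most `(ρ / 2) ^ (1 - n)`, while the graph is the image of `ℝⁿ` under a
Lipschitz map, so its part inside a ball of radius `ρ` has `n`-dimensional Hausdorff measure
`O(ρ ^ n)` (on `ℝⁿ` itself `μH[n]` is a Haar measure, so balls scale like `ρ ^ n`). The `k`-th shell therefore contributes `O(a * β / 2 ^ k)`, and the geometric series
sums to `O(a * β)`.
-/

open MeasureTheory Metric

open scoped ENNReal NNReal

lemma exists_dyadic_shell {R t : ℝ} (ht : 0 < t) (htR : t ≤ R) :
    ∃ k : ℕ, R / 2 ^ k / 2 < t ∧ t ≤ R / 2 ^ k := by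
  obtain ⟨k, hk, hk'⟩ := exists_nat_pow_near ((one_le_div₀ ht).mpr htR) one_lt_two
  refine ⟨k, ?_, ?_⟩
  · rw [div_div, ← pow_succ, div_lt_iff₀ (by positivity)]
    rwa [div_lt_iff₀ ht, mul_comm] at hk'
  · rw [le_div_iff₀ (by positivity)]
    rwa [le_div_iff₀ ht, mul_comm] at hk

lemma half_rpow_one_sub_mul_rpow {ρ : ℝ} (hρ : 0 < ρ) (d : ℝ) :
    (ρ / 2) ^ (1 - d) * ρ ^ d = 2 ^ (d - 1) * ρ := by
  rw [Real.div_rpow hρ.le zero_le_two, div_mul_eq_mul_div, ← Real.rpow_add hρ, sub_add_cancel,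
    Real.rpow_one, div_eq_mul_inv, ← Real.rpow_neg zero_le_two, neg_sub, mul_comm]

section DyadicShell

variable {X : Type*} [MetricSpace X]

def dyadicShell (y : X) (ρ : ℝ) : Set X := {x | ρ / 2 < dist x y ∧ dist x y ≤ ρ}

lemma ball_subset_insert_iUnion_dyadicShell (y : X) (R : ℝ) :
    ball y R ⊆ insert y (⋃ k : ℕ, dyadicShell y (R / 2 ^ k)) := by
  intro x hxR
  rcases eq_or_ne x y with rfl | hxy
  · exact Set.mem_insert _ _
  · obtain ⟨k, hk⟩ := exists_dyadic_shell (dist_pos.mpr hxy) (mem_ball.mp hxR).le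
    exact Set.mem_insert_of_mem _ (Set.mem_iUnion.mpr ⟨k, hk⟩)

variable [MeasurableSpace X] {μ : Measure X} {s : Set X} {y : X} {d : ℝ} {M : ℝ≥0∞}

lemma setLIntegral_inter_dyadicShell_dist_rpow_le (hd : 1 ≤ d)
    (hM : ∀ ρ > 0, μ (s ∩ closedBall y ρ) ≤ M * ENNReal.ofReal (ρ ^ d)) {ρ : ℝ} (hρ : 0 < ρ) :
    ∫⁻ x in s ∩ dyadicShell y ρ, ENNReal.ofReal (dist x y ^ (1 - d)) ∂μ
      ≤ M * ENNReal.ofReal (2 ^ (d - 1) * ρ) := by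
  calc ∫⁻ x in s ∩ dyadicShell y ρ, ENNReal.ofReal (dist x y ^ (1 - d)) ∂μ
      ≤ ∫⁻ _ in s ∩ dyadicShell y ρ, ENNReal.ofReal ((ρ / 2) ^ (1 - d)) ∂μ :=
        setLIntegral_mono measurable_const fun x hx => ENNReal.ofReal_le_ofReal <|
          Real.rpow_le_rpow_of_nonpos (by positivity) hx.2.1.le (by linarith)
    _ = ENNReal.ofReal ((ρ / 2) ^ (1 - d)) * μ (s ∩ dyadicShell y ρ) := setLIntegral_const _ _
    _ ≤ ENNReal.ofReal ((ρ / 2) ^ (1 - d)) * (M * ENNReal.ofReal (ρ ^ d)) := by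
        gcongr
        refine (measure_mono (Set.inter_subset_inter_right _ fun x hx => ?_)).trans (hM ρ hρ)
        exact mem_closedBall.mpr hx.2
    _ = M * ENNReal.ofReal (2 ^ (d - 1) * ρ) := by
        rw [mul_left_comm, ← ENNReal.ofReal_mul (by positivity), half_rpow_one_sub_mul_rpow hρ]

theorem setLIntegral_inter_ball_dist_rpow_le (hy : μ {y} = 0) (hd : 1 ≤ d)
    (hM : ∀ ρ > 0, μ (s ∩ closedBall y ρ) ≤ M * ENNReal.ofReal (ρ ^ d)) {R : ℝ} (hR : 0 < R) :
    ∫⁻ x in s ∩ ball y R, ENNReal.ofReal (dist x y ^ (1 - d)) ∂μ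
      ≤ M * ENNReal.ofReal (2 ^ d * R) := by
  have hshell (k : ℕ) : M * ENNReal.ofReal (2 ^ (d - 1) * (R / 2 ^ k))
      = M * ENNReal.ofReal (2 ^ (d - 1) * R) * 2⁻¹ ^ k := by
    rw [mul_assoc, ← ENNReal.ofReal_ofNat 2, ← ENNReal.ofReal_inv_of_pos two_pos,
      ← ENNReal.ofReal_pow (by norm_num), ← ENNReal.ofReal_mul (by positivity), inv_pow,
      mul_assoc, ← div_eq_mul_inv]
  calc ∫⁻ x in s ∩ ball y R, ENNReal.ofReal (dist x y ^ (1 - d)) ∂μ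
      ≤ ∫⁻ x in {y} ∪ ⋃ k : ℕ, s ∩ dyadicShell y (R / 2 ^ k),
          ENNReal.ofReal (dist x y ^ (1 - d)) ∂μ := by
        refine lintegral_mono_set fun x ⟨hxs, hxR⟩ => ?_
        rcases ball_subset_insert_iUnion_dyadicShell y R hxR with rfl | hx
        · exact Or.inl rfl
        · obtain ⟨k, hk⟩ := Set.mem_iUnion.mp hx
          exact Or.inr (Set.mem_iUnion.mpr ⟨k, hxs, hk⟩)
    _ ≤ (∫⁻ x in {y}, ENNReal.ofReal (dist x y ^ (1 - d)) ∂μ)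
          + ∑' k : ℕ, ∫⁻ x in s ∩ dyadicShell y (R / 2 ^ k),
            ENNReal.ofReal (dist x y ^ (1 - d)) ∂μ :=
        (lintegral_union_le _ _ _).trans (add_le_add_right (lintegral_iUnion_le _ _) _)
    _ ≤ 0 + ∑' k : ℕ, M * ENNReal.ofReal (2 ^ (d - 1) * R) * 2⁻¹ ^ k := by
        refine add_le_add (setLIntegral_measure_zero _ _ hy).le (ENNReal.tsum_le_tsum fun k => ?_)
        rw [← hshell]
        exact setLIntegral_inter_dyadicShell_dist_rpow_le hd hM (by positivity)
    _ = M * ENNReal.ofReal (2 ^ d * R) := by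
        rw [zero_add, ENNReal.tsum_mul_left, ENNReal.tsum_geometric, ENNReal.one_sub_inv_two,
          inv_inv, mul_assoc, ← ENNReal.ofReal_ofNat 2, ← ENNReal.ofReal_mul (by positivity),
          Real.rpow_sub_one two_ne_zero]
        congr 2
        field_simp

end DyadicShell

theorem LipschitzWith.hausdorffMeasure_image_closedBall_le {E X : Type*} [NormedAddCommGroup E]
    [NormedSpace ℝ E] [FiniteDimensional ℝ E] [MeasurableSpace E] [BorelSpace E]
    [EMetricSpace X] [MeasurableSpace X] [BorelSpace X] {K : ℝ≥0} {g : E → X}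
    (hg : LipschitzWith K g) (c : E) {ρ : ℝ} (hρ : 0 ≤ ρ) :
    μH[Module.finrank ℝ E] (g '' closedBall c ρ)
      ≤ K ^ Module.finrank ℝ E * μH[Module.finrank ℝ E] (ball (0 : E) 1)
        * ENNReal.ofReal (ρ ^ Module.finrank ℝ E) := by
  calc μH[Module.finrank ℝ E] (g '' closedBall c ρ)
      ≤ K ^ (Module.finrank ℝ E : ℝ) * μH[Module.finrank ℝ E] (closedBall c ρ) :=
        hg.hausdorffMeasure_image_le (Nat.cast_nonneg _) _
    _ = _ := by
        rw [ENNReal.rpow_natCast, Measure.addHaar_closedBall _ _ hρ, mul_comm (ENNReal.ofReal _),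
          mul_assoc]

lemma dist_pt_sq {n : ℕ} (s t : ℝ) (u v : EuclideanSpace ℝ (Fin n)) :
    dist (pt s u) (pt t v) ^ 2 = dist s t ^ 2 + dist u v ^ 2 := by
  rw [EuclideanSpace.dist_eq, EuclideanSpace.dist_eq, Real.sq_sqrt (by positivity),
    Real.sq_sqrt (by positivity), Fin.sum_univ_succ]
  rfl

lemma exists_eq_pt {n : ℕ} (x : EuclideanSpace ℝ (Fin (n + 1))) : ∃ t u, x = pt t u :=
  ⟨x 0, WithLp.toLp 2 fun j => x j.succ, by ext i; cases i using Fin.cases <;> rfl⟩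

lemma dist_le_dist_pt {n : ℕ} (s t : ℝ) (u v : EuclideanSpace ℝ (Fin n)) :
    dist u v ≤ dist (pt s u) (pt t v) := by
  rw [← pow_le_pow_iff_left₀ dist_nonneg dist_nonneg two_ne_zero, dist_pt_sq]
  exact le_add_of_nonneg_left (sq_nonneg _)

lemma LipschitzWith.graph_pt {n : ℕ} {K : ℝ≥0} {F : EuclideanSpace ℝ (Fin n) → ℝ}
    (hF : LipschitzWith K F) (β : ℝ) : LipschitzWith (K + 1) fun u => pt (β + F u) u := by
  refine LipschitzWith.of_dist_le_mul fun u v => ?_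
  have hFuv : dist (β + F u) (β + F v) ≤ K * dist u v := by
    rw [dist_add_left]; exact hF.dist_le_mul u v
  rw [← pow_le_pow_iff_left₀ dist_nonneg (by positivity) two_ne_zero, dist_pt_sq, NNReal.coe_add,
    NNReal.coe_one]
  nlinarith [dist_nonneg (x := β + F u) (y := β + F v), dist_nonneg (x := u) (y := v), K.2]

theorem hausdorffMeasure_range_pt_graph_inter_closedBall_le {n : ℕ} {K : ℝ≥0}
    {F : EuclideanSpace ℝ (Fin n) → ℝ} (hF : LipschitzWith K F) (β : ℝ)
    (y : EuclideanSpace ℝ (Fin (n + 1))) {ρ : ℝ} (hρ : 0 ≤ ρ) :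
    μH[n] (Set.range (fun u => pt (β + F u) u) ∩ closedBall y ρ)
      ≤ (K + 1) ^ n * μH[n] (ball (0 : EuclideanSpace ℝ (Fin n)) 1) * ENNReal.ofReal (ρ ^ n) := by
  obtain ⟨t, v, rfl⟩ := exists_eq_pt y
  have hsub : Set.range (fun u => pt (β + F u) u) ∩ closedBall (pt t v) ρ
      ⊆ (fun u => pt (β + F u) u) '' closedBall v ρ := by
    rintro _ ⟨⟨u, rfl⟩, hu⟩
    exact ⟨u, (dist_le_dist_pt _ _ u v).trans hu, rfl⟩
  simpa [finrank_euclideanSpace] using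
    (measure_mono hsub).trans ((hF.graph_pt β).hausdorffMeasure_image_closedBall_le v hρ)

theorem stmt2_general (n : ℕ) (hn : 3 ≤ n + 1) (κ : ℝ) :
    ∃ C : ℝ, 0 < C ∧
      ∀ (F : EuclideanSpace ℝ (Fin n) → ℝ), LipschitzWith κ.toNNReal F →
      ∀ (β r a : ℝ), 0 < β → 0 < a →
      ∀ y : EuclideanSpace ℝ (Fin (n + 1)),
        (∫ x in ({x | ∃ x' : EuclideanSpace ℝ (Fin n), ‖x'‖ < r ∧ x = pt (β + F x') x'} ∩
            ball y (a * β)),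
          ‖x - y‖ ^ (2 - ((n : ℝ) + 1)) ∂(Measure.hausdorffMeasure (n : ℝ)))
        ≤ C * a * β := by
  set M : ℝ≥0∞ := (κ.toNNReal + 1) ^ n * μH[n] (ball (0 : EuclideanSpace ℝ (Fin n)) 1)
  have hM : 0 < M.toReal := ENNReal.toReal_pos
    (mul_ne_zero (pow_ne_zero _ (by simp)) (measure_ball_pos _ _ one_pos).ne')
    (ENNReal.mul_ne_top (by simp) measure_ball_lt_top.ne)
  refine ⟨2 ^ n * M.toReal, by positivity, fun F hF β r a hβ ha y => ?_⟩
  have hy : μH[n] {y} = 0 := by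
    simpa using hausdorffMeasure_of_dimH_lt (d := n) (by simp [dimH_singleton]; omega)
  have hgrowth (ρ : ℝ) (hρ : 0 < ρ) :
      μH[n] ({x | ∃ x' : EuclideanSpace ℝ (Fin n), ‖x'‖ < r ∧ x = pt (β + F x') x'} ∩
        closedBall y ρ) ≤ M * ENNReal.ofReal (ρ ^ (n : ℝ)) := by
    rw [Real.rpow_natCast]
    refine (measure_mono (Set.inter_subset_inter_left _ ?_)).trans
      (hausdorffMeasure_range_pt_graph_inter_closedBall_le hF β y hρ.le)
    rintro _ ⟨x', -, rfl⟩
    exact ⟨x', rfl⟩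
  have hbound := setLIntegral_inter_ball_dist_rpow_le hy (by exact_mod_cast (by omega : 1 ≤ n))
    hgrowth (mul_pos ha hβ)
  have hkernel : (fun x => ‖x - y‖ ^ (2 - ((n : ℝ) + 1))) = fun x => dist x y ^ (1 - (n : ℝ)) := by
    ext x; rw [dist_eq_norm]; ring_nf
  have hmeas : Measurable fun x : EuclideanSpace ℝ (Fin (n + 1)) => dist x y ^ (1 - (n : ℝ)) := by
    fun_prop
  rw [hkernel, integral_eq_lintegral_of_nonneg_ae (.of_forall fun x => by positivity)
    hmeas.aestronglyMeasurable]
  calc _ ≤ (M * ENNReal.ofReal (2 ^ (n : ℝ) * (a * β))).toReal :=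
        ENNReal.toReal_mono (by finiteness) hbound
    _ = 2 ^ n * M.toReal * a * β := by
        rw [ENNReal.toReal_mul, ENNReal.toReal_ofReal (by positivity), Real.rpow_natCast]; ring

/-- the integral of the Riesz kernel `|x-y|^{2-N}` over the part of a
κ-Lipschitz graph surface inside a ball of radius `aβ` is at most `C(κ,N)·a·β`,
uniformly in the center `y`, in `β > 0` and in `a > 0`. -/
theorem stmt2 (n : ℕ) (hn : 3 ≤ n + 1) (κ : ℝ) (hκ : 0 < κ) :
    ∃ C : ℝ, 0 < C ∧
      ∀ (F : EuclideanSpace ℝ (Fin n) → ℝ), LipschitzWith κ.toNNReal F →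
      ∀ (β r a : ℝ), 0 < β → 0 < a →
      ∀ y : EuclideanSpace ℝ (Fin (n + 1)),
        (∫ x in ({x | ∃ x' : EuclideanSpace ℝ (Fin n), ‖x'‖ < r ∧ x = pt (β + F x') x'} ∩
            ball y (a * β)),
          ‖x - y‖ ^ (2 - ((n : ℝ) + 1)) ∂(Measure.hausdorffMeasure (n : ℝ)))
        ≤ C * a * β :=
  stmt2_general n hn κ
end
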